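/- Let a ∈ ℝ and 0 ≤ R ≤ 1 with α := a + R > 0, and let K_{a,R} = h + conj(g) be the generalized harmonic Koebe function. Then for every r ∈ [0, 1), |h'(−r)| − |g'(−r)| = (1−r)^{α−1}/(1+r)^{α+1}; that is, K_{a,R} attains equality in the distortion lower bound for affine and linear invariant families of order α along the negative real axis. -/

import Mathlib

/-!
Along the negative real axis everything is real. With `t = (1 - r)/(1 + r)` and `s = t ^ R`,
the shear gives `h' - g' = k_a'(-r) = t ^ (a - 1) / (1 + r) ^ 2 > 0` and the dilatation is
`ω = l_R(-r) = (s - 1)/(s + 1) ∈ (-1, 0]`. Solving `h' (1 - ω) = k_a'` yields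
`|h'| - |g'| = |k_a'| (1 - |ω|) / |1 - ω| = k_a'(-r) · s`, which is the extremal value.
-/

open Complex Set

noncomputable section

/-- The open unit disk in the complex plane. -/
def unitDisk : Set ℂ := {z : ℂ | ‖z‖ < 1}

/-- The generalized Koebe function `k_a`, using the principal branch of the logarithm
(via the complex power function). -/
def koebeFn (a : ℂ) (z : ℂ) : ℂ :=
  if a = 0 then (1 / 2) * Complex.log ((1 + z) / (1 - z))
  else (1 / (2 * a)) * (((1 + z) / (1 - z)) ^ a - 1)

/-- The lens map `l_R` (with principal-branch powers); note that this formula also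
gives `l_0 ≡ 0` and `l_1 = id` on the unit disk. -/
def lensMap (R : ℝ) (z : ℂ) : ℂ :=
  (((1 + z) / (1 - z)) ^ (R : ℂ) - 1) / (((1 + z) / (1 - z)) ^ (R : ℂ) + 1)

/-- The `n`-th Taylor coefficient of `f` at `0`. -/
def coeffAt (f : ℂ → ℂ) (n : ℕ) : ℂ := iteratedDeriv n f 0 / n.factorial

theorem norm_sub_norm_eq_of_eq_mul_of_sub_eq {𝕜 : Type*} [NormedField 𝕜] {H G D ω : 𝕜}
    (hG : G = ω * H) (hD : H - G = D) (hω : ω ≠ 1) :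
    ‖H‖ - ‖G‖ = ‖D‖ * (1 - ‖ω‖) / ‖1 - ω‖ := by
  have hH : H * (1 - ω) = D := by rw [← hD, hG]; ring
  have hnorm : ‖1 - ω‖ ≠ 0 := norm_ne_zero_iff.mpr (sub_ne_zero.mpr hω.symm)
  rw [hG, ← hH, norm_mul, norm_mul]
  field_simp

theorem one_sub_abs_div_abs_one_sub_eq {s : ℝ} (hs0 : 0 < s) (hs1 : s ≤ 1) :
    (1 - |(s - 1) / (s + 1)|) / |1 - (s - 1) / (s + 1)| = s := by
  have hs : 0 < s + 1 := by linarith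
  rw [abs_of_nonpos (div_nonpos_of_nonpos_of_nonneg (by linarith) hs.le),
    abs_of_pos (by rw [one_sub_div hs.ne']; exact div_pos (by linarith) hs)]
  field_simp
  ring

theorem sub_one_div_add_one_ne_one {K : Type*} [Field K] [NeZero (2 : K)] (x : K) :
    (x - 1) / (x + 1) ≠ 1 := by
  intro h
  have hx : x + 1 ≠ 0 := fun h0 => by simp [h0] at h
  rw [div_eq_one_iff_eq hx] at h
  exact two_ne_zero (by linear_combination -h : (2 : K) = 0)

theorem deriv_sub_eq_of_eqOn {𝕜 F : Type*} [NontriviallyNormedField 𝕜] [NormedAddCommGroup F]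
    [NormedSpace 𝕜 F] {f g k : 𝕜 → F} {U : Set 𝕜} {z : 𝕜} (hU : U ∈ nhds z)
    (hf : DifferentiableAt 𝕜 f z) (hg : DifferentiableAt 𝕜 g z) (hk : EqOn (f - g) k U) :
    deriv f z - deriv g z = deriv k z := by
  rw [← deriv_sub hf hg]
  exact Filter.EventuallyEq.deriv_eq (Filter.eventually_of_mem hU hk)

theorem hasDerivAt_koebeFn (a : ℂ) {z : ℂ} (hz : (1 + z) / (1 - z) ∈ slitPlane) :
    HasDerivAt (koebeFn a) (((1 + z) / (1 - z)) ^ (a - 1) / (1 - z) ^ 2) z := by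
  have h1z : 1 - z ≠ 0 := fun h => slitPlane_ne_zero hz (by rw [h, div_zero])
  have hu : HasDerivAt (fun w : ℂ => (1 + w) / (1 - w)) (2 / (1 - z) ^ 2) z := by
    refine (((hasDerivAt_id z).const_add 1).div
      ((hasDerivAt_id z).const_sub 1) h1z).congr_deriv ?_
    simp only [id]
    ring
  rcases eq_or_ne a 0 with rfl | ha
  · have hk : koebeFn 0 = fun w => (1 / 2 : ℂ) * log ((1 + w) / (1 - w)) := by
      funext w; simp [koebeFn]
    rw [hk]
    refine (((hasDerivAt_log hz).comp z hu).const_mul (1 / 2 : ℂ)).congr_deriv ?_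
    rw [zero_sub, cpow_neg_one]
    field_simp
  · have hk : koebeFn a = fun w => 1 / (2 * a) * (((1 + w) / (1 - w)) ^ a - 1) := by
      funext w; simp [koebeFn, ha]
    rw [hk]
    refine (((hu.cpow_const hz).sub_const 1).const_mul (1 / (2 * a))).congr_deriv ?_
    field_simp

theorem one_add_div_one_sub_neg_ofReal (r : ℝ) :
    (1 + -(r : ℂ)) / (1 - -(r : ℂ)) = (((1 - r) / (1 + r) : ℝ) : ℂ) := by
  push_cast
  ring

theorem deriv_koebeFn_neg_ofReal (a : ℝ) {r : ℝ} (hr0 : -1 < r) (hr1 : r < 1) :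
    deriv (koebeFn a) (-(r : ℂ)) =
      ((((1 - r) / (1 + r)) ^ (a - 1) / (1 + r) ^ 2 : ℝ) : ℂ) := by
  have ht : 0 < (1 - r) / (1 + r) := div_pos (by linarith) (by linarith)
  rw [(hasDerivAt_koebeFn a (by
    rw [one_add_div_one_sub_neg_ofReal]; exact ofReal_mem_slitPlane.mpr ht)).deriv,
    one_add_div_one_sub_neg_ofReal, show (a : ℂ) - 1 = ((a - 1 : ℝ) : ℂ) by push_cast; ring,
    ← ofReal_cpow ht.le]
  push_cast
  ring

theorem lensMap_neg_ofReal (R : ℝ) {r : ℝ} (hr0 : -1 < r) (hr1 : r < 1) :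
    lensMap R (-(r : ℂ)) =
      (((((1 - r) / (1 + r)) ^ R - 1) / (((1 - r) / (1 + r)) ^ R + 1) : ℝ) : ℂ) := by
  have ht : 0 ≤ (1 - r) / (1 + r) := div_nonneg (by linarith) (by linarith)
  rw [lensMap, one_add_div_one_sub_neg_ofReal, ← ofReal_cpow ht]
  push_cast
  ring

theorem lensMap_ne_one (R : ℝ) (z : ℂ) : lensMap R z ≠ 1 :=
  sub_one_div_add_one_ne_one _

theorem neg_ofReal_mem_unitDisk {r : ℝ} (hr0 : 0 ≤ r) (hr1 : r < 1) :
    -(r : ℂ) ∈ unitDisk := by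
  simpa [unitDisk, abs_of_nonneg hr0] using hr1

theorem isOpen_unitDisk : IsOpen unitDisk :=
  isOpen_lt continuous_norm continuous_const

theorem koebe_extremal_value (a R : ℝ) {r : ℝ} (hr0 : -1 < r) (hr1 : r < 1) :
    ((1 - r) / (1 + r)) ^ (a - 1) / (1 + r) ^ 2 * ((1 - r) / (1 + r)) ^ R
      = (1 - r) ^ (a + R - 1) / (1 + r) ^ (a + R + 1) := by
  have hp : 0 < 1 - r := by linarith
  have hq : 0 < 1 + r := by linarith
  rw [← Real.rpow_natCast (1 + r) 2, Real.div_rpow hp.le hq.le, Real.div_rpow hp.le hq.le,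
    div_div, div_mul_div_comm, ← Real.rpow_add hp, ← Real.rpow_add hq, ← Real.rpow_add hq]
  ring_nf

theorem generalized_harmonic_koebe_distortion_lower_equality_general
    (a R : ℝ) (hR0 : 0 ≤ R)
    (h g : ℂ → ℂ)
    (hh : DifferentiableOn ℂ h unitDisk) (hg : DifferentiableOn ℂ g unitDisk)
    (hshear : ∀ z ∈ unitDisk, h z - g z = koebeFn (a : ℂ) z)
    (hdil : ∀ z ∈ unitDisk, deriv g z = lensMap R z * deriv h z) :
    ∀ r : ℝ, 0 ≤ r → r < 1 →
      ‖deriv h (-(r : ℂ))‖ - ‖deriv g (-(r : ℂ))‖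
        = (1 - r) ^ (a + R - 1) / (1 + r) ^ (a + R + 1) := by
  intro r hr0 hr1
  have hz := neg_ofReal_mem_unitDisk hr0 hr1
  have hU : unitDisk ∈ nhds (-(r : ℂ)) := isOpen_unitDisk.mem_nhds hz
  have hD := deriv_sub_eq_of_eqOn hU ((hh _ hz).differentiableAt hU)
    ((hg _ hz).differentiableAt hU) hshear
  have hr : -1 < r := by linarith
  have ht : 0 < (1 - r) / (1 + r) := div_pos (by linarith) (by linarith)
  rw [norm_sub_norm_eq_of_eq_mul_of_sub_eq (hdil _ hz) hD (lensMap_ne_one R _),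
    deriv_koebeFn_neg_ofReal a hr hr1, lensMap_neg_ofReal R hr hr1, ← ofReal_one, ← ofReal_sub]
  simp only [norm_real, Real.norm_eq_abs]
  have hs1 : ((1 - r) / (1 + r)) ^ R ≤ 1 :=
    Real.rpow_le_one ht.le (div_le_one_of_le₀ (by linarith) (by linarith)) hR0
  rw [mul_div_assoc, one_sub_abs_div_abs_one_sub_eq (Real.rpow_pos_of_pos ht R) hs1,
    abs_of_pos (by positivity), koebe_extremal_value a R hr hr1]

/-- For real `a` and `0 ≤ R ≤ 1` with `α := a + R > 0`, the generalized harmonic Koebe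
function `K_{a,R} = h + conj g` (defined by `h - g = k_a`, `g' = l_R·h'`,
`h(0) = g(0) = 0`) attains equality in the distortion lower bound along the negative
real axis: `|h'(-r)| - |g'(-r)| = (1-r)^(α-1)/(1+r)^(α+1)` for `0 ≤ r < 1`. -/
theorem generalized_harmonic_koebe_distortion_lower_equality
    (a R : ℝ) (hR0 : 0 ≤ R) (hR1 : R ≤ 1) (hα : 0 < a + R)
    (h g : ℂ → ℂ)
    (hh : DifferentiableOn ℂ h unitDisk) (hg : DifferentiableOn ℂ g unitDisk)
    (h0 : h 0 = 0) (g0 : g 0 = 0)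
    (hshear : ∀ z ∈ unitDisk, h z - g z = koebeFn (a : ℂ) z)
    (hdil : ∀ z ∈ unitDisk, deriv g z = lensMap R z * deriv h z) :
    ∀ r : ℝ, 0 ≤ r → r < 1 →
      ‖deriv h (-(r : ℂ))‖ - ‖deriv g (-(r : ℂ))‖
        = (1 - r) ^ (a + R - 1) / (1 + r) ^ (a + R + 1) :=
  generalized_harmonic_koebe_distortion_lower_equality_general a R hR0 h g hh hg hshear hdil
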